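/- arXiv:2205.11358 — 5 statements merged into one kernel-verified Lean document; each statement's English description precedes it below -/
import Mathlib

section
/- Let m be a linear model m(x) = c + gᵀx and f have L-Lipschitz gradient on an open convex set containing B̄(y⁰,δ). Suppose |m(yʲ) - f(yʲ)| ≤ κδ² for sample points y⁰, y¹, …, yⁿ ∈ B̄(y⁰,δ), and suppose the n×n matrix L with rows (yⁱ - y⁰)ᵀ is invertible with ‖(L/δ)⁻¹‖ ≤ κ_L. Then for all x ∈ B̄(y⁰,δ): ‖∇f(x) - g‖ ≤ (L + (L/2 + 2κ) κ_L √n) δ. -/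
open Metric Matrix

/-- Euclidean operator norm of a matrix. -/
noncomputable def opNorm {m n : Type*} [Fintype m] [Fintype n] [DecidableEq n]
    (A : Matrix m n ℝ) : ℝ :=
  ‖LinearMap.toContinuousLinearMap
    (Matrix.toEuclideanLin A : EuclideanSpace ℝ n →ₗ[ℝ] EuclideanSpace ℝ m)‖

/-!
Write `v = g - ∇f(y⁰)`. Subtracting the interpolation conditions at `y⁰` and `yⁱ` and comparing
with the first-order Taylor expansion of `f` at `y⁰` (error at most `L/2 ‖yⁱ - y⁰‖²`) bounds every
entry `(yⁱ - y⁰)ᵀ v` of `A v` by `(L/2 + 2κ) δ²`, so `‖A v‖ ≤ √n (L/2 + 2κ) δ²`. Inverting the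
scaled matrix `δ⁻¹ A` gives `‖v‖ ≤ κ_L √n (L/2 + 2κ) δ`, and the Lipschitz bound
`‖∇f(x) - ∇f(y⁰)‖ ≤ L δ` on the ball finishes the proof.
-/

open Set

open scoped RealInnerProductSpace

theorem abs_inner_sub_le_of_interpolation {F : Type*} [NormedAddCommGroup F]
    [InnerProductSpace ℝ F] {f m : F → ℝ} {c ε T : ℝ} {g d a b : F}
    (hm : ∀ x, m x = c + ⟪g, x⟫) (ha : |m a - f a| ≤ ε) (hb : |m b - f b| ≤ ε)
    (hT : |f b - f a - ⟪d, b - a⟫| ≤ T) :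
    |⟪g - d, b - a⟫| ≤ T + 2 * ε := by
  have hsplit : ⟪g - d, b - a⟫ = (m b - f b) - (m a - f a) + (f b - f a - ⟪d, b - a⟫) := by
    rw [hm, hm, inner_sub_left, inner_sub_right]; ring
  rw [hsplit, abs_le]
  rw [abs_le] at ha hb hT
  constructor <;> linarith

theorem abs_sub_sub_inner_gradient_le {F : Type*} [NormedAddCommGroup F] [InnerProductSpace ℝ F]
    [CompleteSpace F] {f : F → ℝ} {f' : F → F} {a b : F} {L : ℝ}
    (hdiff : ∀ x ∈ segment ℝ a b, HasGradientAt f (f' x) x)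
    (hlip : ∀ x ∈ segment ℝ a b, ‖f' x - f' a‖ ≤ L * ‖x - a‖) :
    |f b - f a - ⟪f' a, b - a⟫| ≤ L / 2 * ‖b - a‖ ^ 2 := by
  set p : ℝ → F := fun t => a + t • (b - a)
  have hp : ∀ t ∈ Icc (0 : ℝ) 1, p t ∈ segment ℝ a b := fun t ht => by
    rw [segment_eq_image']; exact mem_image_of_mem _ ht
  have hderiv : ∀ t ∈ Icc (0 : ℝ) 1, HasDerivAt (fun t => f (p t) - f a - t * ⟪f' a, b - a⟫)
      ⟪f' (p t) - f' a, b - a⟫ t := by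
    intro t ht
    have hpt : HasDerivAt p (b - a) t := by
      convert ((hasDerivAt_id' t).smul_const (b - a)).const_add a using 1; rw [one_smul]
    rw [inner_sub_left]
    exact (((hdiff _ (hp t ht)).hasFDerivAt.comp_hasDerivAt t hpt).sub_const (f a)).sub
      (hasDerivAt_mul_const ⟪f' a, b - a⟫)
  -- `ψ t = f (p t) - f a - t ⟪f' a, b - a⟫` vanishes at `0` and `|ψ' t| ≤ L t ‖b - a‖²`
  have hbound := image_norm_le_of_norm_deriv_right_le_deriv_boundary
    (B := fun t => L / 2 * t ^ 2 * ‖b - a‖ ^ 2) (B' := fun t => L * t * ‖b - a‖ ^ 2)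
    (fun t ht => (hderiv t ht).continuousAt.continuousWithinAt)
    (fun t ht => (hderiv t (Ico_subset_Icc_self ht)).hasDerivWithinAt)
    (by simp [p]) (fun t => (((hasDerivAt_pow 2 t).const_mul (L / 2)).mul_const _).congr_deriv
      (by simp only [Nat.cast_ofNat, Nat.add_one_sub_one, pow_one]; ring))
    (fun t ht => calc
      ‖⟪f' (p t) - f' a, b - a⟫‖ ≤ ‖f' (p t) - f' a‖ * ‖b - a‖ := norm_inner_le_norm _ _
      _ ≤ L * ‖p t - a‖ * ‖b - a‖ := by gcongr; exact hlip _ (hp t (Ico_subset_Icc_self ht))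
      _ = L * t * ‖b - a‖ ^ 2 := by
        simp only [p, add_sub_cancel_left, norm_smul, Real.norm_of_nonneg ht.1]; ring)
    (right_mem_Icc.2 zero_le_one)
  simpa [p] using hbound

theorem abs_inner_sub_gradient_le_of_mem_closedBall {F : Type*} [NormedAddCommGroup F]
    [InnerProductSpace ℝ F] [CompleteSpace F] {f m : F → ℝ} {f' : F → F} {c δ L κ : ℝ}
    {g a b : F} (hL : 0 ≤ L) (hdiff : ∀ x ∈ closedBall a δ, HasGradientAt f (f' x) x)
    (hlip : ∀ x ∈ closedBall a δ, ‖f' x - f' a‖ ≤ L * ‖x - a‖)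
    (hm : ∀ x, m x = c + ⟪g, x⟫) (ha : |m a - f a| ≤ κ * δ ^ 2) (hb : |m b - f b| ≤ κ * δ ^ 2)
    (hbδ : b ∈ closedBall a δ) :
    |⟪g - f' a, b - a⟫| ≤ (L / 2 + 2 * κ) * δ ^ 2 := by
  have hseg : segment ℝ a b ⊆ closedBall a δ :=
    (convex_closedBall a δ).segment_subset (mem_closedBall_self (dist_nonneg.trans hbδ)) hbδ
  have htaylor := abs_sub_sub_inner_gradient_le (fun x hx => hdiff x (hseg hx))
    (fun x hx => hlip x (hseg hx))
  have hba : ‖b - a‖ ≤ δ := mem_closedBall_iff_norm.1 hbδ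
  calc |⟪g - f' a, b - a⟫| ≤ L / 2 * ‖b - a‖ ^ 2 + 2 * (κ * δ ^ 2) :=
        abs_inner_sub_le_of_interpolation hm ha hb htaylor
    _ ≤ L / 2 * δ ^ 2 + 2 * (κ * δ ^ 2) := by gcongr
    _ = (L / 2 + 2 * κ) * δ ^ 2 := by ring

theorem EuclideanSpace.norm_le_sqrt_card_mul {ι : Type*} [Fintype ι] {w : EuclideanSpace ℝ ι}
    {E : ℝ} (hE : 0 ≤ E) (hw : ∀ i, |w i| ≤ E) : ‖w‖ ≤ √(Fintype.card ι) * E := by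
  refine ((EuclideanSpace.basisFun ι ℝ).norm_le_card_mul_iSup_norm_inner w).trans ?_
  gcongr
  exact Real.iSup_le (fun i => by simpa using hw i) hE

theorem norm_le_opNorm_inv_mul {ι : Type*} [Fintype ι] [DecidableEq ι] {A : Matrix ι ι ℝ}
    (hA : IsUnit A.det) (v : EuclideanSpace ℝ ι) :
    ‖v‖ ≤ opNorm A⁻¹ * ‖toEuclideanLin A v‖ := by
  have hv : toEuclideanLin A⁻¹ (toEuclideanLin A v) = v := by
    rw [← LinearMap.comp_apply, ← toLpLin_mul_same, nonsing_inv_mul A hA, toLpLin_one]; rfl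
  conv_lhs => rw [← hv]
  exact ContinuousLinearMap.le_opNorm (LinearMap.toContinuousLinearMap (toEuclideanLin A⁻¹)) _

theorem norm_le_opNorm_inv_smul_mul {ι : Type*} [Fintype ι] [DecidableEq ι]
    {A : Matrix ι ι ℝ} (hA : IsUnit A.det) {r : ℝ} (hr : 0 < r) (v : EuclideanSpace ℝ ι) :
    ‖v‖ ≤ opNorm (r⁻¹ • A)⁻¹ * (r⁻¹ * ‖toEuclideanLin A v‖) := by
  have hrA : IsUnit (r⁻¹ • A).det := by
    rw [det_smul]; exact ((isUnit_iff_ne_zero.2 (inv_ne_zero hr.ne')).pow _).mul hA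
  have := norm_le_opNorm_inv_mul hrA v
  rwa [map_smul, LinearMap.smul_apply, norm_smul, Real.norm_of_nonneg (inv_nonneg.2 hr.le)] at this

theorem stmt_14_general (n : ℕ) (f : EuclideanSpace ℝ (Fin n) → ℝ)
    (f' : EuclideanSpace ℝ (Fin n) → EuclideanSpace ℝ (Fin n))
    (s : Set (EuclideanSpace ℝ (Fin n)))
    (δ L κ κL : ℝ) (hδ : 0 < δ) (hL : 0 ≤ L) (hκ : 0 ≤ κ)
    (y : Fin (n + 1) → EuclideanSpace ℝ (Fin n))
    (hball : closedBall (y 0) δ ⊆ s)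
    (hy : ∀ j, y j ∈ closedBall (y 0) δ)
    (hdiff : ∀ x ∈ s, HasGradientAt f (f' x) x)
    (hlip : ∀ x ∈ s, ∀ z ∈ s, ‖f' x - f' z‖ ≤ L * ‖x - z‖)
    (c : ℝ) (g : EuclideanSpace ℝ (Fin n))
    (m : EuclideanSpace ℝ (Fin n) → ℝ)
    (hm : ∀ x, m x = c + (inner ℝ g x : ℝ))
    (hint : ∀ j, |m (y j) - f (y j)| ≤ κ * δ ^ 2)
    (A : Matrix (Fin n) (Fin n) ℝ)
    (hA : A = Matrix.of fun (i : Fin n) (j : Fin n) => (y i.succ - y 0) j)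
    (hdet : IsUnit A.det)
    (hAinv : opNorm ((δ⁻¹ • A)⁻¹) ≤ κL) :
    ∀ x ∈ closedBall (y 0) δ,
      ‖f' x - g‖ ≤ (L + (L / 2 + 2 * κ) * κL * Real.sqrt n) * δ := by
  intro x hx
  have hy0 : y 0 ∈ s := hball (hy 0)
  have hrow : ∀ i, |toEuclideanLin A (g - f' (y 0)) i| ≤ (L / 2 + 2 * κ) * δ ^ 2 := by
    intro i
    have hAi : toEuclideanLin A (g - f' (y 0)) i = ⟪g - f' (y 0), y i.succ - y 0⟫ := by
      simp [hA, toLpLin_apply, mulVec, dotProduct, PiLp.inner_apply]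
    rw [hAi]
    exact abs_inner_sub_gradient_le_of_mem_closedBall hL (fun z hz => hdiff z (hball hz))
      (fun z hz => hlip z (hball hz) _ hy0) hm (hint 0) (hint i.succ) (hy i.succ)
  have hgrad : ‖g - f' (y 0)‖ ≤
      κL * (δ⁻¹ * (√(Fintype.card (Fin n)) * ((L / 2 + 2 * κ) * δ ^ 2))) := by
    have hκL : 0 ≤ κL := (norm_nonneg _).trans hAinv
    refine (norm_le_opNorm_inv_smul_mul hdet hδ _).trans ?_
    gcongr
    exact EuclideanSpace.norm_le_sqrt_card_mul (by positivity) hrow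
  calc ‖f' x - g‖ ≤ ‖f' x - f' (y 0)‖ + ‖g - f' (y 0)‖ := by
        rw [norm_sub_rev g]; exact norm_sub_le_norm_sub_add_norm_sub _ _ _
    _ ≤ L * δ + κL * (δ⁻¹ * (√(Fintype.card (Fin n)) * ((L / 2 + 2 * κ) * δ ^ 2))) :=
      add_le_add ((hlip x (hball hx) _ hy0).trans
        (mul_le_mul_of_nonneg_left (mem_closedBall_iff_norm.1 hx) hL)) hgrad
    _ = (L + (L / 2 + 2 * κ) * κL * Real.sqrt n) * δ := by
      rw [Fintype.card_fin]; field_simp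

/-- Gradient error bound for a relaxed linear interpolation model: if `m(x) = c + ⟨g,x⟩`,
`f` has `L`-Lipschitz gradient on an open convex set containing `B̄(y⁰,δ)`,
`|m(yʲ) - f(yʲ)| ≤ κ δ²` for `y⁰,…,yⁿ ∈ B̄(y⁰,δ)`, and the matrix `A` with rows
`(yⁱ - y⁰)ᵀ` is invertible with `‖(A/δ)⁻¹‖ ≤ κ_L`, then on `B̄(y⁰,δ)`:
`‖∇f(x) - g‖ ≤ (L + (L/2 + 2κ) κ_L √n) δ`. -/
theorem stmt_14 (n : ℕ) (f : EuclideanSpace ℝ (Fin n) → ℝ)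
    (f' : EuclideanSpace ℝ (Fin n) → EuclideanSpace ℝ (Fin n))
    (s : Set (EuclideanSpace ℝ (Fin n))) (hs : Convex ℝ s) (hso : IsOpen s)
    (δ L κ κL : ℝ) (hδ : 0 < δ) (hL : 0 ≤ L) (hκ : 0 ≤ κ)
    (y : Fin (n + 1) → EuclideanSpace ℝ (Fin n))
    (hball : closedBall (y 0) δ ⊆ s)
    (hy : ∀ j, y j ∈ closedBall (y 0) δ)
    (hdiff : ∀ x ∈ s, HasGradientAt f (f' x) x)
    (hlip : ∀ x ∈ s, ∀ z ∈ s, ‖f' x - f' z‖ ≤ L * ‖x - z‖)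
    (c : ℝ) (g : EuclideanSpace ℝ (Fin n))
    (m : EuclideanSpace ℝ (Fin n) → ℝ)
    (hm : ∀ x, m x = c + (inner ℝ g x : ℝ))
    (hint : ∀ j, |m (y j) - f (y j)| ≤ κ * δ ^ 2)
    (A : Matrix (Fin n) (Fin n) ℝ)
    (hA : A = Matrix.of fun (i : Fin n) (j : Fin n) => (y i.succ - y 0) j)
    (hdet : IsUnit A.det)
    (hAinv : opNorm ((δ⁻¹ • A)⁻¹) ≤ κL) :
    ∀ x ∈ closedBall (y 0) δ,
      ‖f' x - g‖ ≤ (L + (L / 2 + 2 * κ) * κL * Real.sqrt n) * δ :=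
  stmt_14_general n f f' s δ L κ κL hδ hL hκ y hball hy hdiff hlip c g m hm hint A hA hdet hAinv
end

section
/- Let f have L-Lipschitz gradient on an open convex set containing B̄(y⁰,δ), and let m be a quadratic model with gradient ∇m and Hessian bounded by κ_H that satisfies the gradient error bound ‖∇f(x) - ∇m(x)‖ ≤ Gδ for all x ∈ B̄(y⁰,δ) and the relaxed interpolation condition |m(y⁰) - f(y⁰)| ≤ κδ². Then for all x ∈ B̄(y⁰,δ): |f(x) - m(x)| ≤ ( (L + κ_H)/2 + κ + G ) δ². -/
open Metric Set InnerProductSpace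

/-!
With `e = f - m`, the gradient `∇e` is `(L + κ_H)`-Lipschitz on the convex set, so the
first-order Taylor remainder of `e` at `y⁰` is at most `(L + κ_H)/2 ‖x - y⁰‖²`. The value
`e(y⁰)` is at most `κδ²` and the linear term `⟨∇e(y⁰), x - y⁰⟩` at most `Gδ · δ`.
-/

section TaylorRemainder

variable {E F : Type*} [NormedAddCommGroup E] [NormedSpace ℝ E]
  [NormedAddCommGroup F] [NormedSpace ℝ F]

theorem Convex.norm_image_sub_sub_fderiv_le {f : E → F} {f' : E → E →L[ℝ] F} {s : Set E}
    {M : ℝ} (hs : Convex ℝ s) (hf : ∀ x ∈ s, HasFDerivAt f (f' x) x)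
    (hlip : ∀ x ∈ s, ∀ z ∈ s, ‖f' x - f' z‖ ≤ M * ‖x - z‖) {x y : E} (hx : x ∈ s)
    (hy : y ∈ s) :
    ‖f x - f y - f' y (x - y)‖ ≤ M / 2 * ‖x - y‖ ^ 2 := by
  set v := x - y
  -- `φ` below is fenced by `M / 2 * ‖v‖ ^ 2 * t ^ 2`, whose derivative dominates `‖φ'‖`.
  have hseg : ∀ t ∈ Icc (0 : ℝ) 1, y + t • v ∈ s := fun t ht =>
    hs.add_smul_sub_mem hy hx ht
  let φ : ℝ → F := fun t => f (y + t • v) - f y - t • f' y v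
  have hφ : ∀ t ∈ Icc (0 : ℝ) 1, HasDerivAt φ (f' (y + t • v) v - f' y v) t := by
    intro t ht
    have hline : HasDerivAt (fun t : ℝ => y + t • v) v t := by
      simpa using ((hasDerivAt_id t).smul_const v).const_add y
    exact (((hf _ (hseg t ht)).comp_hasDerivAt t hline).sub_const (f y)).sub
      (by simpa using (hasDerivAt_id t).smul_const (f' y v))
  have hφ' : ∀ t ∈ Ico (0 : ℝ) 1, ‖f' (y + t • v) v - f' y v‖ ≤ M * ‖v‖ ^ 2 * t := by
    intro t ht
    have ht' : t ∈ Icc (0 : ℝ) 1 := Ico_subset_Icc_self ht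
    calc ‖f' (y + t • v) v - f' y v‖ = ‖(f' (y + t • v) - f' y) v‖ := rfl
      _ ≤ ‖f' (y + t • v) - f' y‖ * ‖v‖ := (f' (y + t • v) - f' y).le_opNorm v
      _ ≤ M * ‖y + t • v - y‖ * ‖v‖ := by gcongr; exact hlip _ (hseg t ht') _ hy
      _ = M * ‖v‖ ^ 2 * t := by
        rw [add_sub_cancel_left, norm_smul, Real.norm_of_nonneg ht.1]; ring
  have hB : ∀ t : ℝ, HasDerivAt (fun t => M / 2 * ‖v‖ ^ 2 * t ^ 2) (M * ‖v‖ ^ 2 * t) t :=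
    fun t => ((hasDerivAt_pow 2 t).const_mul (M / 2 * ‖v‖ ^ 2)).congr_deriv (by norm_num; ring)
  have hbound := image_norm_le_of_norm_deriv_right_le_deriv_boundary (f := φ)
    (B := fun t => M / 2 * ‖v‖ ^ 2 * t ^ 2) (B' := fun t => M * ‖v‖ ^ 2 * t)
    (fun t ht => (hφ t ht).continuousAt.continuousWithinAt)
    (fun t ht => (hφ t (Ico_subset_Icc_self ht)).hasDerivWithinAt)
    (by simp [φ]) hB hφ' (right_mem_Icc.2 zero_le_one)
  simpa [φ, v] using hbound

end TaylorRemainder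

section Gradient

variable {F : Type*} [NormedAddCommGroup F] [InnerProductSpace ℝ F] [CompleteSpace F]

theorem HasGradientAt.sub {f g : F → ℝ} {f' g' x : F} (hf : HasGradientAt f f' x)
    (hg : HasGradientAt g g' x) : HasGradientAt (fun x => f x - g x) (f' - g') x := by
  rw [hasGradientAt_iff_hasFDerivAt, map_sub]
  exact hf.hasFDerivAt.sub hg.hasFDerivAt

theorem Convex.abs_image_sub_sub_inner_le {f : F → ℝ} {f' : F → F} {s : Set F} {M : ℝ}
    (hs : Convex ℝ s) (hf : ∀ x ∈ s, HasGradientAt f (f' x) x)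
    (hlip : ∀ x ∈ s, ∀ z ∈ s, ‖f' x - f' z‖ ≤ M * ‖x - z‖) {x y : F} (hx : x ∈ s)
    (hy : y ∈ s) :
    |f x - f y - ⟪f' y, x - y⟫_ℝ| ≤ M / 2 * ‖x - y‖ ^ 2 := by
  have hlip' : ∀ x ∈ s, ∀ z ∈ s, ‖toDual ℝ F (f' x) - toDual ℝ F (f' z)‖ ≤ M * ‖x - z‖ := by
    intro x hx z hz
    rw [← map_sub, LinearIsometryEquiv.norm_map]
    exact hlip x hx z hz
  simpa [toDual_apply_apply] using
    hs.norm_image_sub_sub_fderiv_le (fun x hx => (hf x hx).hasFDerivAt) hlip' hx hy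

end Gradient

theorem stmt_15_general (n : ℕ) (f m : EuclideanSpace ℝ (Fin n) → ℝ)
    (f' m' : EuclideanSpace ℝ (Fin n) → EuclideanSpace ℝ (Fin n))
    (s : Set (EuclideanSpace ℝ (Fin n))) (hs : Convex ℝ s)
    (y0 : EuclideanSpace ℝ (Fin n)) (δ L κ κH G : ℝ)
    (hδ : 0 < δ) (hL : 0 ≤ L) (hκH : 0 ≤ κH) (hG : 0 ≤ G)
    (hball : closedBall y0 δ ⊆ s)
    (hdiff : ∀ x ∈ s, HasGradientAt f (f' x) x)
    (hmdiff : ∀ x ∈ s, HasGradientAt m (m' x) x)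
    (hlip : ∀ x ∈ s, ∀ z ∈ s, ‖f' x - f' z‖ ≤ L * ‖x - z‖)
    (hmlip : ∀ x ∈ s, ∀ z ∈ s, ‖m' x - m' z‖ ≤ κH * ‖x - z‖)
    (hgrad : ∀ x ∈ closedBall y0 δ, ‖f' x - m' x‖ ≤ G * δ)
    (hint : |m y0 - f y0| ≤ κ * δ ^ 2) :
    ∀ x ∈ closedBall y0 δ,
      |f x - m x| ≤ ((L + κH) / 2 + κ + G) * δ ^ 2 := by
  intro x hx
  have hy0 : y0 ∈ closedBall y0 δ := mem_closedBall_self hδ.le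
  have hxy : ‖x - y0‖ ≤ δ := mem_closedBall_iff_norm.1 hx
  have herr_lip : ∀ z ∈ s, ∀ w ∈ s,
      ‖(f' z - m' z) - (f' w - m' w)‖ ≤ (L + κH) * ‖z - w‖ := by
    intro z hz w hw
    rw [sub_sub_sub_comm, add_mul]
    exact (norm_sub_le _ _).trans (add_le_add (hlip z hz w hw) (hmlip z hz w hw))
  have hremainder := hs.abs_image_sub_sub_inner_le (fun z hz => (hdiff z hz).sub (hmdiff z hz))
    herr_lip (hball hx) (hball hy0)
  have hlinear : |⟪f' y0 - m' y0, x - y0⟫_ℝ| ≤ G * δ * δ :=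
    (abs_real_inner_le_norm _ _).trans
      (mul_le_mul (hgrad y0 hy0) hxy (norm_nonneg _) (by positivity))
  have hquadratic : (L + κH) / 2 * ‖x - y0‖ ^ 2 ≤ (L + κH) / 2 * δ ^ 2 := by gcongr
  rw [abs_sub_comm] at hint
  calc |f x - m x|
      = |(f y0 - m y0) + ⟪f' y0 - m' y0, x - y0⟫_ℝ
          + (f x - m x - (f y0 - m y0) - ⟪f' y0 - m' y0, x - y0⟫_ℝ)| := by ring_nf
    _ ≤ |f y0 - m y0| + |⟪f' y0 - m' y0, x - y0⟫_ℝ|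
          + |f x - m x - (f y0 - m y0) - ⟪f' y0 - m' y0, x - y0⟫_ℝ| := abs_add_three _ _ _
    _ ≤ ((L + κH) / 2 + κ + G) * δ ^ 2 := by linarith

/-- If `f` has `L`-Lipschitz gradient on an open convex set containing `B̄(y⁰,δ)`, and
the quadratic model `m` has gradient `m'` which is `κ_H`-Lipschitz (Hessian bounded by
`κ_H`), with gradient error `‖∇f(x) - ∇m(x)‖ ≤ G δ` on the ball and
`|m(y⁰) - f(y⁰)| ≤ κ δ²`, then on `B̄(y⁰,δ)`:
`|f(x) - m(x)| ≤ ((L + κ_H)/2 + κ + G) δ²`. -/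
theorem stmt_15 (n : ℕ) (f m : EuclideanSpace ℝ (Fin n) → ℝ)
    (f' m' : EuclideanSpace ℝ (Fin n) → EuclideanSpace ℝ (Fin n))
    (s : Set (EuclideanSpace ℝ (Fin n))) (hs : Convex ℝ s) (hso : IsOpen s)
    (y0 : EuclideanSpace ℝ (Fin n)) (δ L κ κH G : ℝ)
    (hδ : 0 < δ) (hL : 0 ≤ L) (hκ : 0 ≤ κ) (hκH : 0 ≤ κH) (hG : 0 ≤ G)
    (hball : closedBall y0 δ ⊆ s)
    (hdiff : ∀ x ∈ s, HasGradientAt f (f' x) x)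
    (hmdiff : ∀ x ∈ s, HasGradientAt m (m' x) x)
    (hlip : ∀ x ∈ s, ∀ z ∈ s, ‖f' x - f' z‖ ≤ L * ‖x - z‖)
    (hmlip : ∀ x ∈ s, ∀ z ∈ s, ‖m' x - m' z‖ ≤ κH * ‖x - z‖)
    (hgrad : ∀ x ∈ closedBall y0 δ, ‖f' x - m' x‖ ≤ G * δ)
    (hint : |m y0 - f y0| ≤ κ * δ ^ 2) :
    ∀ x ∈ closedBall y0 δ,
      |f x - m x| ≤ ((L + κH) / 2 + κ + G) * δ ^ 2 :=
  stmt_15_general n f m f' m' s hs y0 δ L κ κH G hδ hL hκH hG hball hdiff hmdiff hlip hmlip hgrad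
    hint
end

section
/- Let ℓ(x) = αᵀφ̄(x) be a quadratic polynomial on ℝⁿ in the natural basis φ̄, with |ℓ(x)| ≤ Λ for all x in the closed unit ball B̄(0,1). Then ‖α‖_∞ ≤ 4Λ, i.e., each coefficient of ℓ in the natural basis is bounded in absolute value by 4Λ. -/
/-!
Comparing `ℓ x` with `ℓ (-x)` and `ℓ 0` isolates the linear part, which is bounded by `Λ`, and
the quadratic form `q x = xᵀ H x`, which is bounded by `4Λ` on the unit ball and hence by
`4Λ ‖x‖²` everywhere. For symmetric `H` polarization gives `4 H_ij = q (eᵢ + eⱼ) - q (eᵢ - eⱼ)`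
(also for `i = j`), and by the parallelogram law `‖eᵢ + eⱼ‖² + ‖eᵢ - eⱼ‖² = 4`, so
`|H_ij| ≤ 4Λ`.
-/

theorem QuadraticMap.map_add_sub_map_sub {R M N : Type*} [CommRing R] [AddCommGroup M]
    [AddCommGroup N] [Module R M] [Module R N] (Q : QuadraticMap R M N) (u v : M) :
    Q (u + v) - Q (u - v) = 2 • polar Q u v := by
  have h := polar_neg_right Q u v
  rw [polar, polar, ← sub_eq_add_neg, Q.map_neg] at h
  rw [polar, two_nsmul]
  linear_combination (norm := abel) -h

theorem Matrix.IsSymm.toQuadraticMap_single_add_sub_single {R n : Type*} [CommRing R]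
    [Fintype n] [DecidableEq n] {M : Matrix n n R} (hM : M.IsSymm) (i j : n) :
    M.toBilin'.toQuadraticMap (Pi.single i 1 + Pi.single j 1) -
      M.toBilin'.toQuadraticMap (Pi.single i 1 - Pi.single j 1) = 4 * M i j := by
  rw [QuadraticMap.map_add_sub_map_sub, LinearMap.BilinMap.polar_toQuadraticMap,
    Matrix.toBilin'_single, Matrix.toBilin'_single, hM.apply i j]
  ring

section NormedSpace

variable {E : Type*} [NormedAddCommGroup E] [NormedSpace ℝ E]
  {c Λ : ℝ} {L : E →ₗ[ℝ] ℝ} {Q : QuadraticMap ℝ E ℝ} {ℓ : E → ℝ}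

theorem abs_linear_part_le (hℓ : ∀ x, ℓ x = c + L x + 1 / 2 * Q x)
    (hbound : ∀ x, ‖x‖ ≤ 1 → |ℓ x| ≤ Λ) {x : E} (hx : ‖x‖ ≤ 1) : |L x| ≤ Λ := by
  have hodd : 2 * L x = ℓ x - ℓ (-x) := by rw [hℓ, hℓ, map_neg, Q.map_neg]; ring
  have h₁ := abs_le.mp (hbound x hx)
  have h₂ := abs_le.mp (hbound (-x) (by rwa [norm_neg]))
  rw [abs_le]
  constructor <;> linarith

theorem abs_quadratic_part_le (hℓ : ∀ x, ℓ x = c + L x + 1 / 2 * Q x)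
    (hbound : ∀ x, ‖x‖ ≤ 1 → |ℓ x| ≤ Λ) {x : E} (hx : ‖x‖ ≤ 1) : |Q x| ≤ 4 * Λ := by
  have heven : Q x = ℓ x + ℓ (-x) - 2 * ℓ 0 := by
    rw [hℓ, hℓ, hℓ, map_neg, Q.map_neg, map_zero, map_zero]; ring
  have h₀ := abs_le.mp (hbound 0 (by simp))
  have h₁ := abs_le.mp (hbound x hx)
  have h₂ := abs_le.mp (hbound (-x) (by rwa [norm_neg]))
  rw [abs_le]
  constructor <;> linarith

theorem QuadraticMap.abs_le_mul_norm_sq (Q : QuadraticMap ℝ E ℝ) {K : ℝ}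
    (hQ : ∀ x, ‖x‖ ≤ 1 → |Q x| ≤ K) (x : E) : |Q x| ≤ K * ‖x‖ ^ 2 := by
  rcases eq_or_ne x 0 with rfl | hx
  · simp
  have hnorm : 0 < ‖x‖ := norm_pos_iff.mpr hx
  have hscale : Q x = ‖x‖ ^ 2 * Q (‖x‖⁻¹ • x) := by
    rw [Q.map_smul, smul_eq_mul]
    field_simp
  rw [hscale, abs_mul, abs_of_pos (by positivity), mul_comm]
  gcongr
  exact hQ _ (by rw [norm_smul, norm_inv, norm_norm, inv_mul_cancel₀ hnorm.ne'])

end NormedSpace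

theorem QuadraticMap.abs_map_add_sub_map_sub_le {E : Type*} [NormedAddCommGroup E]
    [InnerProductSpace ℝ E] (Q : QuadraticMap ℝ E ℝ) {K : ℝ}
    (hQ : ∀ x, ‖x‖ ≤ 1 → |Q x| ≤ K) (u v : E) :
    |Q (u + v) - Q (u - v)| ≤ 2 * K * (‖u‖ ^ 2 + ‖v‖ ^ 2) := by
  have hpar := parallelogram_law_with_norm ℝ u v
  calc |Q (u + v) - Q (u - v)| ≤ |Q (u + v)| + |Q (u - v)| := abs_sub _ _
    _ ≤ K * ‖u + v‖ ^ 2 + K * ‖u - v‖ ^ 2 :=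
      add_le_add (Q.abs_le_mul_norm_sq hQ _) (Q.abs_le_mul_norm_sq hQ _)
    _ = 2 * K * (‖u‖ ^ 2 + ‖v‖ ^ 2) := by linear_combination K * hpar

/-- If a quadratic `ℓ(x) = c + gᵀx + ½ xᵀHx` (with `H` symmetric) satisfies `|ℓ(x)| ≤ Λ`
on the closed unit ball, then all of its natural-basis coefficients (`c`, the `gᵢ`, the
`H_ii` as coefficients of `xᵢ²/2`, and the `H_ij` as coefficients of `xᵢxⱼ`) satisfy
`‖α‖_∞ ≤ 4Λ`. -/
theorem stmt_16 (n : ℕ) (c : ℝ) (g : Fin n → ℝ) (H : Matrix (Fin n) (Fin n) ℝ)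
    (hH : H.IsSymm) (Λ : ℝ)
    (ℓ : EuclideanSpace ℝ (Fin n) → ℝ)
    (hℓ : ∀ x, ℓ x = c + (∑ i, g i * x i) + (1 / 2) * ∑ i, ∑ j, x i * H i j * x j)
    (hbound : ∀ x : EuclideanSpace ℝ (Fin n), ‖x‖ ≤ 1 → |ℓ x| ≤ Λ) :
    |c| ≤ 4 * Λ ∧ (∀ i, |g i| ≤ 4 * Λ) ∧ (∀ i j, |H i j| ≤ 4 * Λ) := by
  set L := innerₛₗ ℝ (WithLp.toLp 2 g)
  set Q := H.toBilin'.toQuadraticMap.comp (WithLp.linearEquiv 2 ℝ (Fin n → ℝ)).toLinearMap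
  have hℓ' : ∀ x, ℓ x = c + L x + 1 / 2 * Q x := fun x => by
    simp [hℓ, L, Q, PiLp.inner_apply, Matrix.toBilin'_apply, mul_comm]
  have hc : |c| ≤ Λ := by simpa [hℓ'] using hbound 0 (by simp)
  refine ⟨by linarith [abs_nonneg c], fun i => ?_, fun i j => ?_⟩
  · have hg := abs_linear_part_le hℓ' hbound (x := EuclideanSpace.single i 1) (by simp)
    rw [show L (EuclideanSpace.single i 1) = g i by
      simp [L, EuclideanSpace.inner_single_right]] at hg
    linarith [abs_nonneg c]
  · have hQ := Q.abs_map_add_sub_map_sub_le (fun x hx => abs_quadratic_part_le hℓ' hbound hx)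
      (EuclideanSpace.single i 1) (EuclideanSpace.single j 1)
    have hpolar : Q (EuclideanSpace.single i 1 + EuclideanSpace.single j 1) -
        Q (EuclideanSpace.single i 1 - EuclideanSpace.single j 1) = 4 * H i j :=
      hH.toQuadraticMap_single_add_sub_single i j
    rw [hpolar, abs_mul, abs_of_pos four_pos, PiLp.norm_single, PiLp.norm_single, norm_one] at hQ
    linarith
end

section
/- For any coefficient vector v ∈ ℝ^{q+1} with ‖v‖_∞ = 1 defining the quadratic polynomial p(x) = vᵀφ̄(x) on ℝⁿ in the natural basis φ̄, we have max_{x ∈ B̄(0,1)} |p(x)| ≥ 1/4. -/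
/-!
Each coefficient of `p` is a short signed combination of values of `p` on the unit ball:
`c = p 0`, `2 gᵢ = p eᵢ - p (-eᵢ)`, `Hᵢᵢ = p eᵢ + p (-eᵢ) - 2 p 0`, and for `i ≠ j`,
`2 Hᵢⱼ = p u₊₊ + p u₋₋ - p u₊₋ - p u₋₊` where `u_στ = (σ eᵢ + τ eⱼ) / √2`.
The weights sum to at most `4` in absolute value, so a coefficient of modulus `1` forces
`|p| ≥ 1/4` at one of these points.
-/

open Finset

noncomputable def quadratic {n : ℕ} (c : ℝ) (g : Fin n → ℝ) (H : Matrix (Fin n) (Fin n) ℝ)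
    (x : EuclideanSpace ℝ (Fin n)) : ℝ :=
  c + (∑ i, g i * x i) + (1 / 2) * ∑ i, ∑ j, x i * H i j * x j

lemma EuclideanSpace.norm_single_add_single {ι : Type*} [Fintype ι] [DecidableEq ι] {i j : ι}
    (hij : i ≠ j) (a b : ℝ) :
    ‖EuclideanSpace.single i a + EuclideanSpace.single j b‖ = √(a ^ 2 + b ^ 2) := by
  rw [← Real.sqrt_sq (norm_nonneg _), norm_add_sq_real, EuclideanSpace.inner_single_left]
  simp [hij]

namespace quadratic

variable {n : ℕ} {c : ℝ} {g : Fin n → ℝ} {H : Matrix (Fin n) (Fin n) ℝ} {M : ℝ}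

@[simp]
lemma apply_zero : quadratic c g H 0 = c := by simp [quadratic]

lemma apply_single (i : Fin n) (a : ℝ) :
    quadratic c g H (EuclideanSpace.single i a) = c + g i * a + (1 / 2) * (a * a * H i i) := by
  simp only [quadratic, PiLp.single_apply, mul_ite, ite_mul, mul_zero, zero_mul, sum_ite_eq',
    mem_univ, if_true]
  ring

lemma apply_single_add_single (i j : Fin n) (a b : ℝ) :
    quadratic c g H (EuclideanSpace.single i a + EuclideanSpace.single j b) =
      c + (g i * a + g j * b) +
        (1 / 2) * (a * a * H i i + a * b * H i j + b * a * H j i + b * b * H j j) := by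
  simp only [quadratic, PiLp.add_apply, PiLp.single_apply, mul_add, add_mul, sum_add_distrib,
    mul_ite, ite_mul, mul_zero, zero_mul, sum_ite_eq', mem_univ, if_true]
  ring

lemma abs_const_lt (hM : ∀ x, ‖x‖ ≤ 1 → |quadratic c g H x| < M) : |c| < M := by
  simpa using hM 0 (by simp)

lemma abs_linear_lt (hM : ∀ x, ‖x‖ ≤ 1 → |quadratic c g H x| < M) (i : Fin n) :
    |g i| < M := by
  have hpos := abs_lt.mp (hM (EuclideanSpace.single i 1) (by simp))
  have hneg := abs_lt.mp (hM (EuclideanSpace.single i (-1)) (by simp))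
  rw [apply_single] at hpos hneg
  exact abs_lt.mpr ⟨by linarith, by linarith⟩

lemma abs_diag_lt (hM : ∀ x, ‖x‖ ≤ 1 → |quadratic c g H x| < M) (i : Fin n) :
    |H i i| < 4 * M := by
  have hzero := abs_lt.mp (abs_const_lt hM)
  have hpos := abs_lt.mp (hM (EuclideanSpace.single i 1) (by simp))
  have hneg := abs_lt.mp (hM (EuclideanSpace.single i (-1)) (by simp))
  rw [apply_single] at hpos hneg
  exact abs_lt.mpr ⟨by linarith, by linarith⟩

lemma abs_offdiag_lt (hH : H.IsSymm) (hM : ∀ x, ‖x‖ ≤ 1 → |quadratic c g H x| < M)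
    {i j : Fin n} (hij : i ≠ j) : |H i j| < 2 * M := by
  set s : ℝ := √(1 / 2)
  have hs : s ^ 2 = 1 / 2 := Real.sq_sqrt (by norm_num)
  set q : ℝ → ℝ → ℝ := fun σ τ ↦
    quadratic c g H (EuclideanSpace.single i (σ * s) + EuclideanSpace.single j (τ * s))
  have hq (σ τ : ℝ) (hσ : σ ^ 2 = 1) (hτ : τ ^ 2 = 1) : |q σ τ| < M := by
    refine hM _ ?_
    rw [EuclideanSpace.norm_single_add_single hij, mul_pow, mul_pow, hσ, hτ, hs]
    norm_num
  have hcomb : q 1 1 + q (-1) (-1) - q 1 (-1) - q (-1) 1 = 2 * H i j := by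
    simp only [q, apply_single_add_single, hH.apply i j]
    linear_combination (4 * H i j) * hs
  have hpp := abs_lt.mp (hq 1 1 (by norm_num) (by norm_num))
  have hmm := abs_lt.mp (hq (-1) (-1) (by norm_num) (by norm_num))
  have hpm := abs_lt.mp (hq 1 (-1) (by norm_num) (by norm_num))
  have hmp := abs_lt.mp (hq (-1) 1 (by norm_num) (by norm_num))
  exact abs_lt.mpr ⟨by linarith, by linarith⟩

end quadratic

theorem stmt_17_general (n : ℕ) (c : ℝ) (g : Fin n → ℝ) (H : Matrix (Fin n) (Fin n) ℝ)
    (hH : H.IsSymm)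
    (heq : |c| = 1 ∨ (∃ i, |g i| = 1) ∨ (∃ i j, |H i j| = 1))
    (p : EuclideanSpace ℝ (Fin n) → ℝ)
    (hp : ∀ x, p x = c + (∑ i, g i * x i) + (1 / 2) * ∑ i, ∑ j, x i * H i j * x j) :
    ∃ x : EuclideanSpace ℝ (Fin n), ‖x‖ ≤ 1 ∧ 1 / 4 ≤ |p x| := by
  obtain rfl : p = quadratic c g H := funext hp
  by_contra! hsmall
  rcases heq with hc | ⟨i, hgi⟩ | ⟨i, j, hHij⟩
  · linarith [quadratic.abs_const_lt hsmall]
  · linarith [quadratic.abs_linear_lt hsmall i]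
  · obtain rfl | hij := eq_or_ne i j
    · linarith [quadratic.abs_diag_lt hsmall i]
    · linarith [quadratic.abs_offdiag_lt hH hsmall hij]

/-- For any coefficient vector with `‖v‖_∞ = 1` (coefficients `c`, `gᵢ`, `H_ij` of the
natural basis `(1, xᵢ, xᵢ²/2, xᵢxⱼ)`, `H` symmetric) defining the quadratic
`p(x) = c + gᵀx + ½ xᵀHx`, we have `max_{‖x‖ ≤ 1} |p(x)| ≥ 1/4`. -/
theorem stmt_17 (n : ℕ) (c : ℝ) (g : Fin n → ℝ) (H : Matrix (Fin n) (Fin n) ℝ)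
    (hH : H.IsSymm)
    (hle : |c| ≤ 1 ∧ (∀ i, |g i| ≤ 1) ∧ (∀ i j, |H i j| ≤ 1))
    (heq : |c| = 1 ∨ (∃ i, |g i| = 1) ∨ (∃ i j, |H i j| = 1))
    (p : EuclideanSpace ℝ (Fin n) → ℝ)
    (hp : ∀ x, p x = c + (∑ i, g i * x i) + (1 / 2) * ∑ i, ∑ j, x i * H i j * x j) :
    ∃ x : EuclideanSpace ℝ (Fin n), ‖x‖ ≤ 1 ∧ 1 / 4 ≤ |p x| :=
  stmt_17_general n c g H hH heq p hp
end

section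
/- Let H be a symmetric n×n real matrix and suppose the quadratic polynomial ℓ(x) = c + gᵀx + (1/2)xᵀHx satisfies |ℓ(x)| ≤ Λ for all x ∈ B̄(0,1). Then ‖H‖ ≤ ‖H‖_F ≤ 4√2 · √(q+1) · Λ, where q + 1 = 1 + n + n(n+1)/2. -/
lemma abs_add_apply_neg_sub_two_mul_le {E : Type*} [SeminormedAddCommGroup E] {f : E → ℝ}
    {Λ : ℝ} (hf : ∀ x, ‖x‖ ≤ 1 → |f x| ≤ Λ) {x : E} (hx : ‖x‖ ≤ 1) :
    |f x + f (-x) - 2 * f 0| ≤ 4 * Λ := by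
  have h₁ := hf x hx
  have h₂ := hf (-x) (by rwa [norm_neg])
  have h₀ := hf 0 (by simp)
  calc |f x + f (-x) - 2 * f 0| ≤ |f x| + |f (-x)| + 2 * |f 0| := by
        grw [abs_sub, abs_add_le, abs_mul, abs_two]
    _ ≤ 4 * Λ := by linarith

namespace ContinuousLinearMap

variable {𝕜 E : Type*} [RCLike 𝕜] [NormedAddCommGroup E] [InnerProductSpace 𝕜 E]

open RCLike in
lemma norm_le_of_abs_re_inner_self_le {T : E →L[𝕜] E} (hT : (T : E →ₗ[𝕜] E).IsSymmetric)
    {M : ℝ} (h : ∀ x, ‖x‖ ≤ 1 → |re (inner 𝕜 (T x) x)| ≤ M) : ‖T‖ ≤ M := by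
  rw [T.norm_eq_iSup_rayleighQuotient hT]
  refine ciSup_le fun x => ?_
  obtain rfl | hx := eq_or_ne x 0
  · simpa using h 0 (by simp)
  have hx' : ‖x‖ ≠ 0 := norm_ne_zero_iff.mpr hx
  set y := ((‖x‖⁻¹ : ℝ) : 𝕜) • x
  have hy : ‖y‖ = 1 := by simp [y, norm_smul, hx']
  rw [← T.rayleigh_smul x (c := ((‖x‖⁻¹ : ℝ) : 𝕜)) (by simpa using hx')]
  have := h y hy.le
  rwa [rayleighQuotient, reApplyInnerSelf_apply, hy, one_pow, div_one]

end ContinuousLinearMap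

namespace Matrix

variable {m n : Type*} [Fintype m] [Fintype n]

lemma sqrt_sum_sq_le_card_mul (A : Matrix n n ℝ) {M : ℝ} (h : ∀ i j, |A i j| ≤ M) :
    √(∑ i, ∑ j, A i j ^ 2) ≤ Fintype.card n * M := by
  rcases isEmpty_or_nonempty n with hn | ⟨⟨i⟩⟩
  · simp
  have hM : 0 ≤ M := (abs_nonneg _).trans (h i i)
  rw [Real.sqrt_le_iff]
  refine ⟨by positivity, ?_⟩
  calc ∑ i, ∑ j, A i j ^ 2 ≤ ∑ _i : n, ∑ _j : n, M ^ 2 := by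
        refine Finset.sum_le_sum fun i _ => Finset.sum_le_sum fun j _ => ?_
        exact sq_le_sq' (abs_le.mp (h i j)).1 (abs_le.mp (h i j)).2
    _ = (Fintype.card n * M) ^ 2 := by simp; ring

variable [DecidableEq n]

lemma inner_toEuclideanLin_self (A : Matrix n n ℝ) (x : EuclideanSpace ℝ n) :
    inner ℝ (toEuclideanLin A x) x = ∑ i, ∑ j, x i * A i j * x j := by
  simp only [PiLp.inner_apply, toLpLin_apply, mulVec, dotProduct, RCLike.inner_apply, conj_trivial,
    Finset.mul_sum]
  exact Finset.sum_congr rfl fun i _ => Finset.sum_congr rfl fun j _ => by ring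

lemma abs_apply_le_opNorm (A : Matrix m n ℝ) (i : m) (j : n) : |A i j| ≤ opNorm A := by
  let T := LinearMap.toContinuousLinearMap
    (toEuclideanLin A : EuclideanSpace ℝ n →ₗ[ℝ] EuclideanSpace ℝ m)
  have hcol : T (EuclideanSpace.single j 1) i = A i j := by simp [T, toLpLin_apply]
  calc |A i j| = ‖T (EuclideanSpace.single j 1) i‖ := by rw [hcol, Real.norm_eq_abs]
    _ ≤ ‖T (EuclideanSpace.single j 1)‖ := PiLp.norm_apply_le _ _
    _ ≤ opNorm A := by simpa [opNorm] using T.le_opNorm (EuclideanSpace.single j 1)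

lemma opNorm_le_sqrt_sum_sq (A : Matrix m n ℝ) : opNorm A ≤ √(∑ i, ∑ j, A i j ^ 2) := by
  refine ContinuousLinearMap.opNorm_le_bound _ (Real.sqrt_nonneg _) fun x => ?_
  have hrow : ∀ i, (∑ j, A i j * x j) ^ 2 ≤ (∑ j, A i j ^ 2) * ‖x‖ ^ 2 := fun i => by
    rw [EuclideanSpace.real_norm_sq_eq]
    exact Finset.sum_mul_sq_le_sq_mul_sq _ _ _
  calc ‖toEuclideanLin A x‖ = √(∑ i, (∑ j, A i j * x j) ^ 2) := by
        simp [EuclideanSpace.norm_eq, toLpLin_apply, mulVec, dotProduct]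
    _ ≤ √((∑ i, ∑ j, A i j ^ 2) * ‖x‖ ^ 2) := by
        rw [Finset.sum_mul]; exact Real.sqrt_le_sqrt (Finset.sum_le_sum fun i _ => hrow i)
    _ = √(∑ i, ∑ j, A i j ^ 2) * ‖x‖ := by
        rw [Real.sqrt_mul (by positivity), Real.sqrt_sq (norm_nonneg x)]

end Matrix

/-- If `H` is symmetric and the quadratic `ℓ(x) = c + gᵀx + ½ xᵀHx` satisfies
`|ℓ(x)| ≤ Λ` on the closed unit ball, then `‖H‖ ≤ ‖H‖_F ≤ 4√2 √(q+1) Λ`,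
where `q + 1 = 1 + n + n(n+1)/2`. -/
theorem stmt_18 (n : ℕ) (c : ℝ) (g : Fin n → ℝ) (H : Matrix (Fin n) (Fin n) ℝ)
    (hH : H.IsSymm) (Λ : ℝ)
    (ℓ : EuclideanSpace ℝ (Fin n) → ℝ)
    (hℓ : ∀ x, ℓ x = c + (∑ i, g i * x i) + (1 / 2) * ∑ i, ∑ j, x i * H i j * x j)
    (hbound : ∀ x : EuclideanSpace ℝ (Fin n), ‖x‖ ≤ 1 → |ℓ x| ≤ Λ) :
    opNorm H ≤ Real.sqrt (∑ i, ∑ j, (H i j) ^ 2) ∧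
    Real.sqrt (∑ i, ∑ j, (H i j) ^ 2) ≤
      4 * Real.sqrt 2 * Real.sqrt (1 + n + n * (n + 1) / 2) * Λ := by
  have hsecond_diff : ∀ x, ℓ x + ℓ (-x) - 2 * ℓ 0 = inner ℝ (Matrix.toEuclideanLin H x) x := by
    intro x
    simp only [Matrix.inner_toEuclideanLin_self, hℓ, PiLp.neg_apply, PiLp.zero_apply, neg_mul,
      mul_neg, neg_neg, mul_zero, zero_mul, Finset.sum_neg_distrib, Finset.sum_const_zero]
    ring
  have hop : opNorm H ≤ 4 * Λ := by
    refine ContinuousLinearMap.norm_le_of_abs_re_inner_self_le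
      (Matrix.isSymmetric_toEuclideanLin_iff.mpr (Matrix.isHermitian_iff_isSymm.mpr hH))
      fun x hx => ?_
    rw [RCLike.re_to_real, LinearMap.coe_toContinuousLinearMap', ← hsecond_diff]
    exact abs_add_apply_neg_sub_two_mul_le hbound hx
  have hΛ : 0 ≤ Λ := (abs_nonneg _).trans (hbound 0 (by simp))
  have hn : (n : ℝ) ≤ √2 * √(1 + n + n * (n + 1) / 2) := by
    rw [← Real.sqrt_mul zero_le_two, Real.le_sqrt (by positivity) (by positivity)]
    nlinarith
  refine ⟨H.opNorm_le_sqrt_sum_sq, ?_⟩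
  calc √(∑ i, ∑ j, H i j ^ 2) ≤ n * (4 * Λ) := by
        simpa using H.sqrt_sum_sq_le_card_mul fun i j => (H.abs_apply_le_opNorm i j).trans hop
    _ ≤ √2 * √(1 + n + n * (n + 1) / 2) * (4 * Λ) := mul_le_mul_of_nonneg_right hn (by linarith)
    _ = 4 * √2 * √(1 + n + n * (n + 1) / 2) * Λ := by ring
end
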